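/- Let Ω ⊆ ℝ³ be open and let U⁽¹⁾, U⁽²⁾ : Ω → M₂(ℂ) be continuously differentiable with unitary values. For a unitary-valued differentiable V define the currents Lᵢ(V) = V† ∂ᵢV and Rᵢ(V) = V ∂ᵢV†, the modified currents L̃ᵢ(V) = Lᵢ(V) − (1/4) Σⱼ [Lⱼ(V),[Lⱼ(V),Lᵢ(V)]] and R̃ᵢ(V) = Rᵢ(V) − (1/4) Σⱼ [Rⱼ(V),[Rⱼ(V),Rᵢ(V)]], and the Skyrme energy density e(V) = −(1/2) Σᵢ tr(Lᵢ(V)Lᵢ(V)) − (1/16) Σ_{i,j} tr([Lⱼ(V),Lᵢ(V)][Lⱼ(V),Lᵢ(V)]). Write Lᵢ = Lᵢ(U⁽¹⁾), L̃ᵢ = L̃ᵢ(U⁽¹⁾), Rᵢ = Rᵢ(U⁽²⁾), R̃ᵢ = R̃ᵢ(U⁽²⁾). Then at every point of Ω, e(U⁽¹⁾U⁽²⁾) = e(U⁽¹⁾) + e(U⁽²⁾) + w₂ + w₄, where w₂ = Σᵢ tr(Lᵢ R̃ᵢ + L̃ᵢ Rᵢ − Lᵢ Rᵢ) and w₄ =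 −(1/8) Σ_{i,j} tr([Lᵢ,Rⱼ][Lᵢ,Rⱼ] + [Lᵢ,Rⱼ][Rᵢ,Lⱼ] + [Lᵢ,Lⱼ][Rᵢ,Rⱼ]). -/

import Mathlib

open Matrix

noncomputable section

/-- `ℝ³` with the Euclidean norm. -/
abbrev E3 : Type := EuclideanSpace ℝ (Fin 3)

/-- `2 × 2` complex matrices. -/
abbrev M2 : Type := Matrix (Fin 2) (Fin 2) ℂ

/-- Entrywise partial derivative `∂ᵢ` of a matrix-valued field on `ℝ³`. -/
def pdM (i : Fin 3) (V : E3 → M2) (x : E3) : M2 :=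
  Matrix.of fun a b => fderiv ℝ (fun y => V y a b) x (EuclideanSpace.single i 1)

/-- The matrix commutator `[A,B] = AB - BA`. -/
def brk (A B : M2) : M2 := A * B - B * A

/-- The current `Lᵢ(V) = V† ∂ᵢV`. -/
def curL (i : Fin 3) (V : E3 → M2) (x : E3) : M2 := (V x)ᴴ * pdM i V x

/-- The current `Rᵢ(V) = V ∂ᵢV†`. -/
def curR (i : Fin 3) (V : E3 → M2) (x : E3) : M2 :=
  V x * pdM i (fun y => (V y)ᴴ) x

/-- The modified current `L̃ᵢ(V) = Lᵢ(V) - (1/4) Σⱼ [Lⱼ(V),[Lⱼ(V),Lᵢ(V)]]`. -/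
def curLt (i : Fin 3) (V : E3 → M2) (x : E3) : M2 :=
  curL i V x - (1 / 4 : ℂ) • ∑ j : Fin 3, brk (curL j V x) (brk (curL j V x) (curL i V x))

/-- The modified current `R̃ᵢ(V) = Rᵢ(V) - (1/4) Σⱼ [Rⱼ(V),[Rⱼ(V),Rᵢ(V)]]`. -/
def curRt (i : Fin 3) (V : E3 → M2) (x : E3) : M2 :=
  curR i V x - (1 / 4 : ℂ) • ∑ j : Fin 3, brk (curR j V x) (brk (curR j V x) (curR i V x))

/-- The Skyrme energy density
`e(V) = -(1/2) Σᵢ tr(Lᵢ Lᵢ) - (1/16) Σᵢⱼ tr([Lⱼ,Lᵢ][Lⱼ,Lᵢ])`. -/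
def eDen (V : E3 → M2) (x : E3) : ℂ :=
  -(1 / 2 : ℂ) * ∑ i : Fin 3, (curL i V x * curL i V x).trace
    - (1 / 16 : ℂ) * ∑ i : Fin 3, ∑ j : Fin 3,
        (brk (curL j V x) (curL i V x) * brk (curL j V x) (curL i V x)).trace

/-!
By the Leibniz rule, `Lᵢ(U⁽¹⁾U⁽²⁾) = U⁽²⁾† (Lᵢ - Rᵢ) U⁽²⁾`, where `Lᵢ(U⁽²⁾) = -U⁽²⁾† Rᵢ U⁽²⁾` comes
from differentiating `U⁽²⁾† U⁽²⁾ = 1`. The energy density is a function of the currents alone,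
invariant under simultaneous conjugation and under `L ↦ -L`, so everything reduces to expanding
`e(L - R)` for arbitrary families of matrices. That expansion only needs cyclicity of the trace,
in the form `tr([A,B] C) = tr(A [B,C])`, and the symmetry of the double sums under `i ↔ j`.
-/

attribute [local instance] LieRing.ofAssociativeRing

section Commutators

variable {ι n : Type*} [Fintype ι] [Fintype n]

theorem Finset.sum_sum_eq_of_add_swap {M : Type*} [AddCommGroup M] [IsAddTorsionFree M]
    {f g : ι → ι → M} (h : ∀ i j, f i j + f j i = g i j + g j i) :
    ∑ i, ∑ j, f i j = ∑ i, ∑ j, g i j := by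
  have hdouble (F : ι → ι → M) : 2 • ∑ i, ∑ j, F i j = ∑ i, ∑ j, (F i j + F j i) := by
    rw [two_nsmul]
    nth_rewrite 2 [Finset.sum_comm]
    simp only [Finset.sum_add_distrib]
  exact nsmul_right_injective two_ne_zero (by simp only [hdouble, h])

variable {𝕜 : Type*} [CommRing 𝕜]

theorem Matrix.trace_lie_mul_eq (A B C : Matrix n n 𝕜) :
    (⁅A, B⁆ * C).trace = (A * ⁅B, C⁆).trace := by
  simp only [Ring.lie_def, sub_mul, mul_sub, trace_sub, Matrix.mul_assoc]
  rw [trace_mul_comm B (A * C), Matrix.mul_assoc]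

theorem Matrix.sum_trace_mul_self_sub (L R : ι → Matrix n n 𝕜) :
    ∑ i, ((L i - R i) * (L i - R i)).trace
      = ∑ i, (L i * L i).trace + ∑ i, (R i * R i).trace - 2 * ∑ i, (L i * R i).trace := by
  simp only [Finset.mul_sum, ← Finset.sum_add_distrib, ← Finset.sum_sub_distrib]
  refine Finset.sum_congr rfl fun i _ => ?_
  simp only [mul_sub, sub_mul, trace_sub, trace_mul_comm (R i) (L i)]
  ring

variable [DecidableEq n]

theorem Matrix.conj_mul_conj {P Q : Matrix n n 𝕜} (h : Q * P = 1) (A B : Matrix n n 𝕜) :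
    P * A * Q * (P * B * Q) = P * (A * B) * Q := by
  simp only [Matrix.mul_assoc, ← Matrix.mul_assoc Q, h, Matrix.one_mul]

theorem Matrix.lie_conj {P Q : Matrix n n 𝕜} (h : Q * P = 1) (A B : Matrix n n 𝕜) :
    ⁅P * A * Q, P * B * Q⁆ = P * ⁅A, B⁆ * Q := by
  simp only [Ring.lie_def, conj_mul_conj h, mul_sub, sub_mul]

theorem Matrix.trace_conj_mul_conj {P Q : Matrix n n 𝕜} (h : Q * P = 1) (A B : Matrix n n 𝕜) :
    (P * A * Q * (P * B * Q)).trace = (A * B).trace := by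
  rw [conj_mul_conj h, trace_mul_cycle, ← Matrix.mul_assoc, h, Matrix.one_mul]

theorem Matrix.sum_trace_lie_sub_sq [IsAddTorsionFree 𝕜] (L R : ι → Matrix n n 𝕜) :
    ∑ i, ∑ j, (⁅L j - R j, L i - R i⁆ * ⁅L j - R j, L i - R i⁆).trace
      = ∑ i, ∑ j, (⁅L j, L i⁆ * ⁅L j, L i⁆).trace + ∑ i, ∑ j, (⁅R j, R i⁆ * ⁅R j, R i⁆).trace
        + 2 * ∑ i, ∑ j, (⁅L i, R j⁆ * ⁅L i, R j⁆ + ⁅L i, R j⁆ * ⁅R i, L j⁆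
            + ⁅L i, L j⁆ * ⁅R i, R j⁆).trace
        - 4 * ∑ i, ∑ j, (⁅L j, L i⁆ * ⁅L j, R i⁆ + ⁅R i, R j⁆ * ⁅L i, R j⁆).trace := by
  -- After symmetrizing in `i ↔ j`, both sides are quadratic in the four commutators
  -- `⁅L j, L i⁆, ⁅L j, R i⁆, ⁅R j, L i⁆, ⁅R j, R i⁆`, and agree modulo `tr (X * Y) = tr (Y * X)`.
  simp only [Finset.mul_sum, ← Finset.sum_add_distrib, ← Finset.sum_sub_distrib]
  refine Finset.sum_sum_eq_of_add_swap fun i j => ?_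
  simp only [lie_sub, sub_lie, ← lie_skew (L i) (L j), ← lie_skew (L i) (R j),
    ← lie_skew (R i) (L j), ← lie_skew (R i) (R j)]
  simp only [mul_add, sub_mul, mul_sub, neg_mul, mul_neg, neg_neg, trace_add, trace_sub, trace_neg,
    trace_mul_comm ⁅L j, R i⁆ ⁅L j, L i⁆, trace_mul_comm ⁅R j, L i⁆ ⁅L j, L i⁆,
    trace_mul_comm ⁅R j, R i⁆ ⁅L j, L i⁆, trace_mul_comm ⁅R j, L i⁆ ⁅L j, R i⁆,
    trace_mul_comm ⁅R j, R i⁆ ⁅L j, R i⁆, trace_mul_comm ⁅R j, R i⁆ ⁅R j, L i⁆]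
  ring

end Commutators

section SkyrmeModel

variable {ι n 𝕜 : Type*} [Fintype ι] [Fintype n] [Field 𝕜]

def skyrmeEnergy (L : ι → Matrix n n 𝕜) : 𝕜 :=
  -(1 / 2 : 𝕜) * ∑ i, (L i * L i).trace
    - (1 / 16 : 𝕜) * ∑ i, ∑ j, (⁅L j, L i⁆ * ⁅L j, L i⁆).trace

def modCurrent (L : ι → Matrix n n 𝕜) (i : ι) : Matrix n n 𝕜 :=
  L i - (1 / 4 : 𝕜) • ∑ j, ⁅L j, ⁅L j, L i⁆⁆

def quadInteraction (L R : ι → Matrix n n 𝕜) : 𝕜 :=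
  ∑ i, (L i * modCurrent R i + modCurrent L i * R i - L i * R i).trace

def quartInteraction (L R : ι → Matrix n n 𝕜) : 𝕜 :=
  -(1 / 8 : 𝕜) * ∑ i, ∑ j,
    (⁅L i, R j⁆ * ⁅L i, R j⁆ + ⁅L i, R j⁆ * ⁅R i, L j⁆ + ⁅L i, L j⁆ * ⁅R i, R j⁆).trace

variable [DecidableEq n]

theorem trace_mul_modCurrent (L R : ι → Matrix n n 𝕜) (i : ι) :
    (L i * modCurrent R i).trace
      = (L i * R i).trace + (1 / 4 : 𝕜) * ∑ j, (⁅R i, R j⁆ * ⁅L i, R j⁆).trace := by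
  have h (j : ι) : (L i * ⁅R j, ⁅R j, R i⁆⁆).trace = -(⁅R i, R j⁆ * ⁅L i, R j⁆).trace := by
    rw [← trace_lie_mul_eq, trace_mul_comm, ← lie_skew, neg_mul, trace_neg]
  simp only [modCurrent, mul_sub, mul_smul_comm, Matrix.mul_sum, trace_sub, trace_smul,
    trace_sum, smul_eq_mul, h, Finset.sum_neg_distrib]
  ring

theorem trace_modCurrent_mul (L R : ι → Matrix n n 𝕜) (i : ι) :
    (modCurrent L i * R i).trace
      = (L i * R i).trace + (1 / 4 : 𝕜) * ∑ j, (⁅L j, L i⁆ * ⁅L j, R i⁆).trace := by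
  have h (j : ι) : (⁅L j, ⁅L j, L i⁆⁆ * R i).trace = -(⁅L j, L i⁆ * ⁅L j, R i⁆).trace := by
    rw [← lie_skew, neg_mul, trace_neg, trace_lie_mul_eq]
  simp only [modCurrent, sub_mul, smul_mul_assoc, Matrix.sum_mul, trace_sub, trace_smul,
    trace_sum, smul_eq_mul, h, Finset.sum_neg_distrib]
  ring

theorem skyrmeEnergy_sub [CharZero 𝕜] (L R : ι → Matrix n n 𝕜) :
    skyrmeEnergy (L - R)
      = skyrmeEnergy L + skyrmeEnergy R + quadInteraction L R + quartInteraction L R := by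
  simp only [skyrmeEnergy, quadInteraction, quartInteraction, Pi.sub_apply, trace_add, trace_sub,
    Finset.sum_add_distrib, Finset.sum_sub_distrib, trace_mul_modCurrent, trace_modCurrent_mul,
    sum_trace_mul_self_sub, sum_trace_lie_sub_sq, ← Finset.mul_sum]
  ring

theorem skyrmeEnergy_neg (L : ι → Matrix n n 𝕜) : skyrmeEnergy (-L) = skyrmeEnergy L := by
  simp only [skyrmeEnergy, Pi.neg_apply, neg_lie, lie_neg, neg_neg, neg_mul_neg]

theorem skyrmeEnergy_conj {P Q : Matrix n n 𝕜} (h : Q * P = 1) (L : ι → Matrix n n 𝕜) :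
    skyrmeEnergy (fun i => P * L i * Q) = skyrmeEnergy L := by
  simp only [skyrmeEnergy, lie_conj h, trace_conj_mul_conj h]

end SkyrmeModel

theorem pdM_mul {F G : E3 → M2} {x : E3} (i : Fin 3)
    (hF : ∀ a b, DifferentiableAt ℝ (fun y => F y a b) x)
    (hG : ∀ a b, DifferentiableAt ℝ (fun y => G y a b) x) :
    pdM i (fun y => F y * G y) x = pdM i F x * G x + F x * pdM i G x := by
  ext a b
  simp only [pdM, of_apply, Matrix.add_apply, Matrix.mul_apply]
  rw [fderiv_fun_sum (A := fun c y => F y a c * G y c b)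
      fun c _ => (hF a c).mul (hG c b), _root_.sum_apply, ← Finset.sum_add_distrib]
  refine Finset.sum_congr rfl fun c _ => ?_
  rw [fderiv_fun_mul (hF a c) (hG c b)]
  simp only [_root_.add_apply, _root_.smul_apply, smul_eq_mul]
  ring

theorem pdM_eq_zero_of_eventuallyEq_const {F : E3 → M2} {x : E3} {C : M2}
    (h : F =ᶠ[nhds x] fun _ => C) (i : Fin 3) : pdM i F x = 0 := by
  ext a b
  have hab : (fun y => F y a b) =ᶠ[nhds x] fun _ => C a b :=
    h.mono fun y hy => congrArg (fun M : M2 => M a b) hy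
  simp [pdM, hab.fderiv_eq]

theorem curL_mul {U V : E3 → M2} {x : E3} (i : Fin 3)
    (hU : ∀ a b, DifferentiableAt ℝ (fun y => U y a b) x)
    (hV : ∀ a b, DifferentiableAt ℝ (fun y => V y a b) x) (hUx : (U x)ᴴ * U x = 1) :
    curL i (fun y => U y * V y) x = (V x)ᴴ * curL i U x * V x + curL i V x := by
  simp only [curL, pdM_mul i hU hV, conjTranspose_mul]
  calc (V x)ᴴ * (U x)ᴴ * (pdM i U x * V x + U x * pdM i V x)
      = (V x)ᴴ * ((U x)ᴴ * pdM i U x) * V x + (V x)ᴴ * ((U x)ᴴ * U x) * pdM i V x := by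
        noncomm_ring
    _ = _ := by rw [hUx, Matrix.mul_one]

-- Differentiating `V† V = 1` gives `(∂ᵢV†) V = -V† ∂ᵢV`.
theorem conj_curR_conj {V : E3 → M2} {x : E3} (i : Fin 3)
    (hV : ∀ a b, DifferentiableAt ℝ (fun y => V y a b) x)
    (hunit : ∀ᶠ y in nhds x, (V y)ᴴ * V y = 1) :
    (V x)ᴴ * curR i V x * V x = -curL i V x := by
  have hVstar : ∀ a b, DifferentiableAt ℝ (fun y => (V y)ᴴ a b) x := fun a b => by
    simpa only [conjTranspose_apply] using (hV b a).star
  have hderiv : pdM i (fun y => (V y)ᴴ) x * V x + (V x)ᴴ * pdM i V x = 0 := by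
    rw [← pdM_mul i hVstar hV, pdM_eq_zero_of_eventuallyEq_const hunit]
  calc (V x)ᴴ * curR i V x * V x
      = (V x)ᴴ * V x * (pdM i (fun y => (V y)ᴴ) x * V x) := by simp only [curR, Matrix.mul_assoc]
    _ = -curL i V x := by
        rw [hunit.self_of_nhds, Matrix.one_mul, eq_neg_of_add_eq_zero_left hderiv, curL]

theorem eDen_eq_skyrmeEnergy (V : E3 → M2) (x : E3) :
    eDen V x = skyrmeEnergy (fun i => curL i V x) :=
  rfl

/-- Pointwise decomposition of the Skyrme energy density of the product
ansatz: `e(U⁽¹⁾U⁽²⁾) = e(U⁽¹⁾) + e(U⁽²⁾) + w₂ + w₄` with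
`w₂ = Σᵢ tr(Lᵢ R̃ᵢ + L̃ᵢ Rᵢ - Lᵢ Rᵢ)` and
`w₄ = -(1/8) Σᵢⱼ tr([Lᵢ,Rⱼ][Lᵢ,Rⱼ] + [Lᵢ,Rⱼ][Rᵢ,Lⱼ] + [Lᵢ,Lⱼ][Rᵢ,Rⱼ])`,
where `Lᵢ = Lᵢ(U⁽¹⁾)` and `Rᵢ = Rᵢ(U⁽²⁾)`. -/
theorem product_ansatz_energy_density (Ω : Set E3) (hΩ : IsOpen Ω)
    (U1 U2 : E3 → M2)
    (hU1d : ∀ a b : Fin 2, ContDiffOn ℝ 1 (fun y => U1 y a b) Ω)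
    (hU2d : ∀ a b : Fin 2, ContDiffOn ℝ 1 (fun y => U2 y a b) Ω)
    (hU1u : ∀ x ∈ Ω, (U1 x)ᴴ * U1 x = 1 ∧ U1 x * (U1 x)ᴴ = 1)
    (hU2u : ∀ x ∈ Ω, (U2 x)ᴴ * U2 x = 1 ∧ U2 x * (U2 x)ᴴ = 1) :
    ∀ x ∈ Ω,
      eDen (fun y => U1 y * U2 y) x
        = eDen U1 x + eDen U2 x
          + (∑ i : Fin 3,
              (curL i U1 x * curRt i U2 x + curLt i U1 x * curR i U2 x
                - curL i U1 x * curR i U2 x).trace)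
          + (-(1 / 8 : ℂ) * ∑ i : Fin 3, ∑ j : Fin 3,
              (brk (curL i U1 x) (curR j U2 x) * brk (curL i U1 x) (curR j U2 x)
                + brk (curL i U1 x) (curR j U2 x) * brk (curR i U2 x) (curL j U1 x)
                + brk (curL i U1 x) (curL j U1 x) * brk (curR i U2 x) (curR j U2 x)).trace) := by
  intro x hx
  have hdiff {U : E3 → M2} (hU : ∀ a b : Fin 2, ContDiffOn ℝ 1 (fun y => U y a b) Ω) :
      ∀ a b, DifferentiableAt ℝ (fun y => U y a b) x := fun a b =>
    ((hU a b).differentiableOn one_ne_zero).differentiableAt (hΩ.mem_nhds hx)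
  have hunit2 : ∀ᶠ y in nhds x, (U2 y)ᴴ * U2 y = 1 :=
    Filter.eventually_of_mem (hΩ.mem_nhds hx) fun y hy => (hU2u y hy).1
  have hL (i : Fin 3) : curL i (fun y => U1 y * U2 y) x
      = (U2 x)ᴴ * (curL i U1 x - curR i U2 x) * U2 x := by
    rw [curL_mul i (hdiff hU1d) (hdiff hU2d) (hU1u x hx).1, mul_sub, sub_mul,
      conj_curR_conj i (hdiff hU2d) hunit2, sub_neg_eq_add]
  have hL2 (i : Fin 3) : curL i U2 x = (U2 x)ᴴ * -curR i U2 x * U2 x := by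
    rw [mul_neg, neg_mul, conj_curR_conj i (hdiff hU2d) hunit2, neg_neg]
  have hprod : eDen (fun y => U1 y * U2 y) x
      = skyrmeEnergy ((fun i => curL i U1 x) - fun i => curR i U2 x) := by
    rw [eDen_eq_skyrmeEnergy]
    simp only [hL]
    exact skyrmeEnergy_conj (hU2u x hx).2 _
  have hsecond : eDen U2 x = skyrmeEnergy (fun i => curR i U2 x) := by
    rw [eDen_eq_skyrmeEnergy]
    simp only [hL2]
    exact (skyrmeEnergy_conj (hU2u x hx).2 (-fun i => curR i U2 x)).trans (skyrmeEnergy_neg _)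
  rw [hprod, hsecond, eDen_eq_skyrmeEnergy U1 x, skyrmeEnergy_sub]
  rfl
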